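/- arXiv:0901.4564 — 3 statements merged into one kernel-verified Lean document; each statement's English description precedes it below -/
import Mathlib

section
/- For every n and every i with 0 ≤ i ≤ 2J_{n−2}, ν_2(T(2^n − J_{n−2} + i)) = ν_2(T(J_{n−1} + i)) + 2J_{n−3}. -/
open Nat Finset

/-- The ASM counting sequence `T(n) = ∏_{j=0}^{n-1} (3j+1)!/(n+j)!`. -/
def T (n : ℕ) : ℚ := ∏ j ∈ Finset.range n, ((3 * j + 1)! : ℚ) / ((n + j)! : ℚ)

/-- The Jacobsthal numbers: `J 0 = J 1 = 1`, `J (n+2) = J (n+1) + 2 * J n`. -/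
def J : ℕ → ℕ
  | 0 => 1
  | 1 => 1
  | (n + 2) => J (n + 1) + 2 * J n

/-- Sum of the base-`p` digits of `n`. -/
def S (p n : ℕ) : ℕ := (Nat.digits p n).sum

/-- The generalized sequence `T_p(n) = ∏_{j=0}^{n-1} (pj+1)!/(n+j)!`. -/
def Tp (p n : ℕ) : ℚ := ∏ j ∈ Finset.range n, ((p * j + 1)! : ℚ) / ((n + j)! : ℚ)

/-! ### Binary digit sum lemmas -/

lemma s_div (n : ℕ) : S 2 n = n % 2 + S 2 (n / 2) := by
  rcases Nat.eq_zero_or_pos n with h | h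
  · simp [h, S]
  · rw [S, S, Nat.digits_def' (by norm_num) h]; simp

lemma s_le (n : ℕ) : S 2 n ≤ n := Nat.digit_sum_le 2 n

lemma s_two_mul (n : ℕ) : S 2 (2 * n) = S 2 n := by
  rw [s_div (2 * n)]
  have e1 : 2 * n % 2 = 0 := by omega
  have e2 : 2 * n / 2 = n := by omega
  rw [e1, e2]; simp

lemma s_two_mul_add_one (n : ℕ) : S 2 (2 * n + 1) = S 2 n + 1 := by
  rw [s_div (2 * n + 1)]
  have e1 : (2 * n + 1) % 2 = 1 := by omega
  have e2 : (2 * n + 1) / 2 = n := by omega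
  rw [e1, e2]; ring

lemma s_add_pow {a x : ℕ} (h : x < 2 ^ a) : S 2 (2 ^ a + x) = S 2 x + 1 := by
  induction a generalizing x with
  | zero => interval_cases x; simp [S]
  | succ a ih =>
    have h2 : (2:ℕ) ^ (a+1) = 2 ^ a * 2 := pow_succ 2 a
    have hx : x / 2 < 2 ^ a := by omega
    have e1 : (2 ^ (a+1) + x) % 2 = x % 2 := by omega
    have e2 : (2 ^ (a+1) + x) / 2 = 2 ^ a + x / 2 := by omega
    rw [s_div (2 ^ (a+1) + x), e1, e2, ih hx, s_div x]; ring

/-! ### Legendre's formula and the valuation of `T` -/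

lemma legendre2 (n : ℕ) : (padicValNat 2 (n !) : ℤ) = (n : ℤ) - S 2 n := by
  have h := sub_one_mul_padicValNat_factorial (p := 2) (hp := ⟨Nat.prime_two⟩) n
  have hs : S 2 n ≤ n := s_le n
  simp only [S] at hs ⊢; omega

lemma padicValRat_prod {ι : Type*} (s : Finset ι) (f : ι → ℚ) (hf : ∀ i ∈ s, f i ≠ 0) :
    padicValRat 2 (∏ i ∈ s, f i) = ∑ i ∈ s, padicValRat 2 (f i) := by
  classical
  induction s using Finset.cons_induction with
  | empty => simp
  | cons a s ha ih =>
    rw [Finset.prod_cons, Finset.sum_cons,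
      padicValRat.mul (hf a (Finset.mem_cons_self a s))
        (Finset.prod_ne_zero_iff.2 fun i hi => hf i (Finset.mem_cons_of_mem hi)),
      ih fun i hi => hf i (Finset.mem_cons_of_mem hi)]

lemma sum_odd (M : ℕ) : ∑ j ∈ Finset.range M, (2 * (j:ℤ) + 1) = (M : ℤ) ^ 2 := by
  induction M with
  | zero => simp
  | succ m ih => rw [Finset.sum_range_succ, ih]; push_cast; ring

lemma padic_T (M : ℕ) : padicValRat 2 (T M) =
    ∑ j ∈ Finset.range M, ((S 2 (M + j) : ℤ) - (S 2 (3 * j + 1) : ℤ)) := by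
  rw [T, padicValRat_prod _ _ (fun i _ => div_ne_zero (by positivity) (by positivity))]
  have h1 : ∀ j ∈ Finset.range M, padicValRat 2 (((3 * j + 1)! : ℚ) / ((M + j)! : ℚ))
      = ((S 2 (M + j) : ℤ) - (S 2 (3 * j + 1) : ℤ)) + (2 * (j:ℤ) + 1) - M := by
    intro j _
    rw [padicValRat.div (by positivity) (by positivity),
      padicValRat.of_nat, padicValRat.of_nat, legendre2, legendre2]
    push_cast; ring
  rw [Finset.sum_congr rfl h1]
  rw [Finset.sum_sub_distrib, Finset.sum_add_distrib, sum_odd]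
  simp [mul_comm]
  ring

/-- The telescoped valuation function. -/
def V (M : ℕ) : ℤ := ∑ k ∈ Finset.range M, ((S 2 k : ℤ) + 1 - (S 2 (3 * k + 1) : ℤ))

lemma V_succ (M : ℕ) : V (M + 1) = V M + ((S 2 M : ℤ) + 1 - (S 2 (3 * M + 1) : ℤ)) := by
  rw [V, V, Finset.sum_range_succ]

lemma A_succ (M : ℕ) :
    (∑ j ∈ Finset.range (M + 1), (S 2 (M + 1 + j) : ℤ))
      = (∑ j ∈ Finset.range M, (S 2 (M + j) : ℤ)) + (S 2 M : ℤ) + 1 := by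
  have hA : ∀ N : ℕ, (∑ j ∈ Finset.range N, (S 2 (N + j) : ℤ))
      = ∑ k ∈ Finset.Ico N (2 * N), (S 2 k : ℤ) := by
    intro N
    rw [Finset.sum_Ico_eq_sum_range]
    have h : 2 * N - N = N := by omega
    rw [h]
  rw [hA, hA]
  rcases Nat.eq_zero_or_pos M with rfl | hM
  · have h0 : S 2 0 = 0 := by simp [S]
    have h1 : S 2 1 = 1 := by rw [s_div]; simp [h0]
    rw [show Finset.Ico 1 2 = {1} from rfl, show Finset.Ico 0 0 = ∅ from rfl]
    simp [h0, h1]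
  · have h1 : 2 * (M + 1) = (2 * M + 1) + 1 := by omega
    have h2 : (2 * M + 1) = (2 * M) + 1 := rfl
    rw [h1, Finset.sum_Ico_succ_top (by omega), h2, Finset.sum_Ico_succ_top (by omega),
      Finset.sum_eq_sum_Ico_succ_bot (by omega : M < 2 * M)]
    rw [s_two_mul, s_two_mul_add_one]
    push_cast
    ring

lemma AB_V (M : ℕ) :
    (∑ j ∈ Finset.range M, ((S 2 (M + j) : ℤ) - (S 2 (3 * j + 1) : ℤ))) = V M := by
  induction M with
  | zero => simp [V]
  | succ m ih =>
    rw [Finset.sum_sub_distrib] at ih ⊢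
    rw [A_succ, Finset.sum_range_succ (fun j => (S 2 (3 * j + 1) : ℤ)), V_succ, ← ih]
    ring

lemma padicT_V (M : ℕ) : padicValRat 2 (T M) = V M := by
  rw [padic_T, AB_V]

/-! ### Jacobsthal lemmas -/

lemma J_add_two (n : ℕ) : J (n + 2) = J (n + 1) + 2 * J n := rfl

lemma hJJ (k : ℕ) : J k + J (k + 1) = 2 ^ (k + 1) := by
  induction k with
  | zero => simp [J]
  | succ m ih =>
    rw [J_add_two]
    have hp : (2:ℕ) ^ (m + 2) = 2 ^ (m + 1) * 2 := pow_succ 2 (m + 1)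
    omega

lemma hJpar (k : ℕ) :
    (Even k ∧ 3 * J k = 2 ^ (k + 1) + 1) ∨ (¬ Even k ∧ 3 * J k + 1 = 2 ^ (k + 1)) := by
  induction k with
  | zero => exact Or.inl ⟨Even.zero, by norm_num [show J 0 = 1 from rfl]⟩
  | succ m ih =>
    have hJ : J m + J (m + 1) = 2 ^ (m + 1) := hJJ m
    have hp : (2:ℕ) ^ (m + 2) = 2 ^ (m + 1) * 2 := pow_succ 2 (m + 1)
    rcases ih with ⟨he, hv⟩ | ⟨he, hv⟩
    · right
      refine ⟨by simpa [Nat.even_add_one] using he, by omega⟩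
    · left
      refine ⟨by simpa [Nat.even_add_one] using he, by omega⟩

lemma h3Jd (k : ℕ) : 3 * J k = 2 ^ (k + 1) + 1 ∨ 3 * J k + 1 = 2 ^ (k + 1) := by
  rcases hJpar k with ⟨_, h⟩ | ⟨_, h⟩
  · exact Or.inl h
  · exact Or.inr h

/-! ### The anchor: `V (2^(k+2)) = J (k+1)` -/

lemma delta_pow {K r : ℕ} (h : r < 2 ^ K) :
    ((S 2 (2 ^ K + r) : ℤ) + 1 - (S 2 (3 * (2 ^ K + r) + 1) : ℤ))
      = ((S 2 r : ℤ) + 1 - (S 2 (3 * r + 1) : ℤ))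
        + (2 * (if 2 ^ K ≤ 3 * r + 1 then (1:ℤ) else 0)
          - (if 2 ^ (K + 1) ≤ 3 * r + 1 then (1:ℤ) else 0) - 1) := by
  have hp1 : (2:ℕ) ^ (K + 1) = 2 ^ K * 2 := pow_succ 2 K
  have hp2 : (2:ℕ) ^ (K + 2) = 2 ^ (K + 1) * 2 := pow_succ 2 (K + 1)
  have hm : S 2 (2 ^ K + r) = S 2 r + 1 := s_add_pow h
  by_cases c1 : 3 * r + 1 < 2 ^ K
  · have e2 : 3 * (2 ^ K + r) + 1 = 2 ^ (K + 1) + (2 ^ K + (3 * r + 1)) := by omega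
    rw [hm, e2, s_add_pow (a := K + 1) (by omega), s_add_pow (a := K) c1,
      if_neg (by omega), if_neg (by omega)]
    push_cast; ring
  · by_cases c2 : 3 * r + 1 < 2 ^ (K + 1)
    · obtain ⟨u, hu1, hu2⟩ : ∃ u, 3 * r + 1 = 2 ^ K + u ∧ u < 2 ^ K :=
        ⟨3 * r + 1 - 2 ^ K, by omega, by omega⟩
      have e2 : 3 * (2 ^ K + r) + 1 = 2 ^ (K + 2) + u := by omega
      rw [hm, hu1, e2, s_add_pow (a := K + 2) (by omega), s_add_pow (a := K) hu2,
        if_pos (by omega), if_neg (by omega)]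
      push_cast; ring
    · obtain ⟨u, hu1, hu2⟩ : ∃ u, 3 * r + 1 = 2 ^ (K + 1) + u ∧ u < 2 ^ K :=
        ⟨3 * r + 1 - 2 ^ (K + 1), by omega, by omega⟩
      have e2 : 3 * (2 ^ K + r) + 1 = 2 ^ (K + 2) + (2 ^ K + u) := by omega
      rw [hm, hu1, e2, s_add_pow (a := K + 2) (by omega), s_add_pow (a := K + 1) (by omega),
        s_add_pow (a := K) hu2, if_pos (by omega), if_pos (by omega)]
      push_cast; ring

lemma pow2mod3 (K : ℕ) : (Even K ∧ 2 ^ K % 3 = 1) ∨ (¬ Even K ∧ 2 ^ K % 3 = 2) := by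
  induction K with
  | zero => left; simp
  | succ m ih =>
    have hp : (2:ℕ) ^ (m + 1) = 2 ^ m * 2 := pow_succ 2 m
    rcases ih with ⟨he, hv⟩ | ⟨he, hv⟩
    · right; exact ⟨by simpa [Nat.even_add_one] using he, by omega⟩
    · left; exact ⟨by simpa [Nat.even_add_one] using he, by omega⟩

lemma Vpow (K : ℕ) : V (2 ^ (K + 1)) = 2 * V (2 ^ K) + (-1 : ℤ) ^ K := by
  have hp1 : (2:ℕ) ^ (K + 1) = 2 ^ K * 2 := pow_succ 2 K
  have hsplit : V (2 ^ (K + 1)) = V (2 ^ K)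
      + ∑ r ∈ Finset.range (2 ^ K),
          ((S 2 (2 ^ K + r) : ℤ) + 1 - (S 2 (3 * (2 ^ K + r) + 1) : ℤ)) := by
    rw [V, show (2:ℕ) ^ (K + 1) = 2 ^ K + 2 ^ K from by omega, Finset.sum_range_add]
    rfl
  rw [hsplit, Finset.sum_congr rfl (fun r hr => delta_pow (Finset.mem_range.1 hr)),
    Finset.sum_add_distrib]
  have hδV : (∑ r ∈ Finset.range (2 ^ K),
      ((S 2 r : ℤ) + 1 - (S 2 (3 * r + 1) : ℤ))) = V (2 ^ K) := rfl
  rw [hδV, Finset.sum_sub_distrib, Finset.sum_sub_distrib, ← Finset.mul_sum,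
    Finset.sum_boole, Finset.sum_boole, Finset.sum_const, Finset.card_range]
  simp only [nsmul_eq_mul, mul_one]
  rcases pow2mod3 K with ⟨he, hv⟩ | ⟨he, hv⟩
  · obtain ⟨t, ht⟩ : ∃ t, 2 ^ K = 3 * t + 1 := ⟨2 ^ K / 3, by omega⟩
    have f1 : (Finset.range (2 ^ K)).filter (fun r => 2 ^ K ≤ 3 * r + 1)
        = Finset.Ico t (2 ^ K) := by
      ext r; simp only [Finset.mem_filter, Finset.mem_range, Finset.mem_Ico]; omega
    have f2 : (Finset.range (2 ^ K)).filter (fun r => 2 ^ (K + 1) ≤ 3 * r + 1)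
        = Finset.Ico (2 * t + 1) (2 ^ K) := by
      ext r; simp only [Finset.mem_filter, Finset.mem_range, Finset.mem_Ico]; omega
    have htz : ((2:ℕ) ^ K : ℤ) = 3 * t + 1 := by exact_mod_cast congrArg (Nat.cast (R := ℤ)) ht
    rw [f1, f2, Nat.card_Ico, Nat.card_Ico, Even.neg_one_pow he,
      Nat.cast_sub (by omega), Nat.cast_sub (by omega)]
    push_cast
    linarith [htz]
  · obtain ⟨t, ht⟩ : ∃ t, 2 ^ K = 3 * t + 2 := ⟨2 ^ K / 3, by omega⟩
    have f1 : (Finset.range (2 ^ K)).filter (fun r => 2 ^ K ≤ 3 * r + 1)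
        = Finset.Ico (t + 1) (2 ^ K) := by
      ext r; simp only [Finset.mem_filter, Finset.mem_range, Finset.mem_Ico]; omega
    have f2 : (Finset.range (2 ^ K)).filter (fun r => 2 ^ (K + 1) ≤ 3 * r + 1)
        = Finset.Ico (2 * t + 1) (2 ^ K) := by
      ext r; simp only [Finset.mem_filter, Finset.mem_range, Finset.mem_Ico]; omega
    have htz : ((2:ℕ) ^ K : ℤ) = 3 * t + 2 := by exact_mod_cast congrArg (Nat.cast (R := ℤ)) ht
    rw [f1, f2, Nat.card_Ico, Nat.card_Ico, Odd.neg_one_pow (Nat.not_even_iff_odd.1 he),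
      Nat.cast_sub (by omega), Nat.cast_sub (by omega)]
    push_cast
    linarith [htz]

lemma VpowJ (k : ℕ) : V (2 ^ (k + 2)) = (J (k + 1) : ℤ) := by
  induction k with
  | zero =>
    have h0 : S 2 0 = 0 := by simp [S]
    have h1 : S 2 1 = 1 := by rw [s_div]; norm_num [h0]
    have h2 : S 2 2 = 1 := by rw [s_div]; norm_num [h1]
    have h3 : S 2 3 = 2 := by rw [s_div]; norm_num [h1]
    have h4 : S 2 4 = 1 := by rw [s_div]; norm_num [h2]
    have h5 : S 2 5 = 2 := by rw [s_div]; norm_num [h2]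
    have h7 : S 2 7 = 3 := by rw [s_div]; norm_num [h3]
    have h10 : S 2 10 = 2 := by rw [s_div]; norm_num [h5]
    show V 4 = (J 1 : ℤ)
    rw [V]
    rw [Finset.sum_range_succ, Finset.sum_range_succ, Finset.sum_range_succ,
      Finset.sum_range_one]
    norm_num [h0, h1, h2, h3, h4, h7, h10, J]
  | succ m ih =>
    have hv := Vpow (m + 2)
    have hpar := hJpar m
    have hparn := hJpar (m + 1)
    have hp : (2:ℕ) ^ (m + 2) = 2 ^ (m + 1) * 2 := pow_succ 2 (m + 1)
    have hJ2 : J (m + 2) = J (m + 1) + 2 * J m := rfl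
    have hneg : (-1 : ℤ) ^ (m + 2) = (-1 : ℤ) ^ m := by ring
    rw [show m + 1 + 2 = m + 2 + 1 from rfl, hv, ih, hneg,
      show m + 1 + 1 = m + 2 from rfl]
    rcases hpar with ⟨he, hv1⟩ | ⟨he, hv1⟩
    · rcases hparn with ⟨he2, _⟩ | ⟨_, hv2⟩
      · exact absurd he2 (by simpa [Nat.even_add_one] using he)
      · rw [Even.neg_one_pow he]
        push_cast
        omega
    · rcases hparn with ⟨_, hv2⟩ | ⟨he2, _⟩
      · rw [Odd.neg_one_pow (Nat.not_even_iff_odd.1 he)]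
        push_cast
        omega
      · exact absurd (by simpa [Nat.even_add_one] using he) he2

/-! ### Constancy of the valuation difference on the Jacobsthal interval -/

lemma delta_const {n m : ℕ} (h1 : J (n + 2) ≤ m) (h2 : m < J (n + 3)) :
    ((S 2 (2 ^ (n + 2) + m) : ℤ) + 1 - (S 2 (3 * (2 ^ (n + 2) + m) + 1) : ℤ))
      = ((S 2 m : ℤ) + 1 - (S 2 (3 * m + 1) : ℤ)) := by
  have hp1 : (2:ℕ) ^ (n + 3) = 2 ^ (n + 2) * 2 := pow_succ 2 (n + 2)
  have hp2 : (2:ℕ) ^ (n + 4) = 2 ^ (n + 3) * 2 := pow_succ 2 (n + 3)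
  have hF1 : 3 * J (n + 3) ≤ 2 ^ (n + 4) + 1 := by rcases h3Jd (n + 3) with h | h <;> omega
  have hF2 : 2 ^ (n + 3) ≤ 3 * J (n + 2) + 1 := by rcases h3Jd (n + 2) with h | h <;> omega
  by_cases hc : m < 2 ^ (n + 2)
  · obtain ⟨u, hu1, hu2⟩ : ∃ u, 3 * m + 1 = 2 ^ (n + 3) + u ∧ u < 2 ^ (n + 2) :=
      ⟨3 * m + 1 - 2 ^ (n + 3), by omega, by omega⟩
    have e2 : 3 * (2 ^ (n + 2) + m) + 1 = 2 ^ (n + 4) + (2 ^ (n + 2) + u) := by omega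
    rw [s_add_pow (a := n + 2) hc, hu1, e2, s_add_pow (a := n + 4) (by omega),
      s_add_pow (a := n + 3) (by omega), s_add_pow (a := n + 2) hu2]
    push_cast; ring
  · obtain ⟨r, hr1, hr2⟩ : ∃ r, m = 2 ^ (n + 2) + r ∧ 3 * r + 1 < 2 ^ (n + 2) :=
      ⟨m - 2 ^ (n + 2), by omega, by omega⟩
    subst hr1
    have e1 : 2 ^ (n + 2) + (2 ^ (n + 2) + r) = 2 ^ (n + 3) + r := by omega
    have e2 : 3 * (2 ^ (n + 3) + r) + 1 = 2 ^ (n + 4) + (2 ^ (n + 3) + (3 * r + 1)) := by omega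
    have e3 : 3 * (2 ^ (n + 2) + r) + 1 = 2 ^ (n + 3) + (2 ^ (n + 2) + (3 * r + 1)) := by omega
    rw [e1, e2, e3, s_add_pow (a := n + 3) (by omega), s_add_pow (a := n + 4) (by omega),
      s_add_pow (a := n + 3) (by omega), s_add_pow (a := n + 3) (by omega),
      s_add_pow (a := n + 2) (by omega), s_add_pow (a := n + 2) (by omega)]

theorem stmt11 (n i : ℕ) (hi : i ≤ 2 * J (n + 1)) :
    padicValRat 2 (T (2 ^ (n + 3) - J (n + 1) + i)) =
      padicValRat 2 (T (J (n + 2) + i)) + (2 * J n : ℤ) := by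
  have hp1 : (2:ℕ) ^ (n + 3) = 2 ^ (n + 2) * 2 := pow_succ 2 (n + 2)
  have hp2 : (2:ℕ) ^ (n + 4) = 2 ^ (n + 3) * 2 := pow_succ 2 (n + 3)
  have hJJ1 : J (n + 1) + J (n + 2) = 2 ^ (n + 2) := hJJ (n + 1)
  have hJ3 : J (n + 3) = J (n + 2) + 2 * J (n + 1) := rfl
  have hJ2 : J (n + 2) = J (n + 1) + 2 * J n := rfl
  have hd2 : 3 * J (n + 2) = 2 ^ (n + 3) + 1 ∨ 3 * J (n + 2) + 1 = 2 ^ (n + 3) := h3Jd (n + 2)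
  have hd3 : 3 * J (n + 3) = 2 ^ (n + 4) + 1 ∨ 3 * J (n + 3) + 1 = 2 ^ (n + 4) := h3Jd (n + 3)
  -- constancy of the difference
  have key : ∀ j ≤ 2 * J (n + 1),
      V (2 ^ (n + 2) + (J (n + 2) + j))
        = V (J (n + 2) + j) + (V (2 ^ (n + 2) + J (n + 2)) - V (J (n + 2))) := by
    intro j hj
    induction j with
    | zero => ring
    | succ i ih =>
      have hle : i ≤ 2 * J (n + 1) := by omega
      have hih := ih hle
      have hmem1 : J (n + 2) ≤ J (n + 2) + i := by omega
      have hmem2 : J (n + 2) + i < J (n + 3) := by omega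
      have hδ := delta_const hmem1 hmem2
      have hs1 : V (2 ^ (n + 2) + (J (n + 2) + (i + 1)))
          = V (2 ^ (n + 2) + (J (n + 2) + i))
            + ((S 2 (2 ^ (n + 2) + (J (n + 2) + i)) : ℤ) + 1
              - (S 2 (3 * (2 ^ (n + 2) + (J (n + 2) + i)) + 1) : ℤ)) := by
        rw [show 2 ^ (n + 2) + (J (n + 2) + (i + 1)) = (2 ^ (n + 2) + (J (n + 2) + i)) + 1
          from by omega, V_succ]
      have hs2 : V (J (n + 2) + (i + 1))
          = V (J (n + 2) + i)
            + ((S 2 (J (n + 2) + i) : ℤ) + 1 - (S 2 (3 * (J (n + 2) + i) + 1) : ℤ)) := by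
        rw [show J (n + 2) + (i + 1) = (J (n + 2) + i) + 1 from by omega, V_succ]
      rw [hs1, hs2, hδ, hih]
      ring
  -- the anchor value of the difference
  have hanchor : V (2 ^ (n + 2) + J (n + 2)) - V (J (n + 2)) = (2 * J n : ℤ) := by
    have hle1 : J (n + 2) ≤ 2 ^ (n + 2) := by omega
    have hle2 : 2 ^ (n + 2) ≤ J (n + 2) + 2 * J (n + 1) := by omega
    have hkey := key (2 ^ (n + 2) - J (n + 2)) (by omega)
    rw [show J (n + 2) + (2 ^ (n + 2) - J (n + 2)) = 2 ^ (n + 2) from by omega,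
      show 2 ^ (n + 2) + 2 ^ (n + 2) = 2 ^ (n + 3) from by omega] at hkey
    have hv1 : V (2 ^ (n + 3)) = (J (n + 2) : ℤ) := VpowJ (n + 1)
    have hv2 : V (2 ^ (n + 2)) = (J (n + 1) : ℤ) := VpowJ n
    rw [hv1, hv2] at hkey
    push_cast at hkey ⊢
    omega
  have hidx : 2 ^ (n + 3) - J (n + 1) + i = 2 ^ (n + 2) + (J (n + 2) + i) := by omega
  rw [padicT_V, padicT_V, hidx, key i hi, hanchor]
end

section
/- For every n ≥ 1 and every i with 1 ≤ i ≤ J_{n−1}, ν_2(T(2^n − i)) = ν_2(T(2^n + i)), i.e. the 2-adic valuation of T is symmetric about 2^n on the interval [J_n, J_{n+1}]. -/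
open Nat Finset

/-! ### Digit sum lemmas -/

lemma S_two_mul (k : ℕ) : S 2 (2 * k) = S 2 k := by
  rcases Nat.eq_zero_or_pos k with h | h
  · simp [h, S]
  · rw [S, S, Nat.digits_def' one_lt_two (by omega)]
    simp [Nat.mul_div_cancel_left, Nat.mul_mod_right]

lemma S_two_mul_add_one (k : ℕ) : S 2 (2 * k + 1) = S 2 k + 1 := by
  rw [S, S, Nat.digits_def' one_lt_two (by omega)]
  have h1 : (2 * k + 1) % 2 = 1 := by omega
  have h2 : (2 * k + 1) / 2 = k := by omega
  rw [h1, h2]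
  simp [add_comm]

lemma S_pow_add : ∀ (b m : ℕ), m < 2 ^ b → S 2 (2 ^ b + m) = S 2 m + 1
  | 0, m, h => by
    interval_cases m
    simp [S]
  | b + 1, m, h => by
    have hpow : (2:ℕ) ^ (b + 1) = 2 * 2 ^ b := by ring
    obtain ⟨k, rfl | rfl⟩ := Nat.even_or_odd' m
    · have hk : k < 2 ^ b := by omega
      have h1 : 2 ^ (b + 1) + 2 * k = 2 * (2 ^ b + k) := by omega
      rw [h1, S_two_mul, S_pow_add b k hk, S_two_mul]
    · have hk : k < 2 ^ b := by omega
      have h1 : 2 ^ (b + 1) + (2 * k + 1) = 2 * (2 ^ b + k) + 1 := by omega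
      rw [h1, S_two_mul_add_one, S_pow_add b k hk, S_two_mul_add_one]

lemma S_compl : ∀ (b t : ℕ), t < 2 ^ b → S 2 (2 ^ b - 1 - t) + S 2 t = b
  | 0, t, h => by
    interval_cases t
    simp [S]
  | b + 1, t, h => by
    have hpow : (2:ℕ) ^ (b + 1) = 2 * 2 ^ b := by ring
    obtain ⟨k, rfl | rfl⟩ := Nat.even_or_odd' t
    · have hk : k < 2 ^ b := by omega
      have h1 : 2 ^ (b + 1) - 1 - 2 * k = 2 * (2 ^ b - 1 - k) + 1 := by omega
      have ih := S_compl b k hk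
      rw [h1, S_two_mul_add_one, S_two_mul]
      omega
    · have hk : k < 2 ^ b := by omega
      have h1 : 2 ^ (b + 1) - 1 - (2 * k + 1) = 2 * (2 ^ b - 1 - k) := by omega
      have ih := S_compl b k hk
      rw [h1, S_two_mul, S_two_mul_add_one]
      omega

lemma sum_S_two_mul (N : ℕ) :
    ∑ k ∈ Finset.range (2 * N), S 2 k = 2 * (∑ k ∈ Finset.range N, S 2 k) + N := by
  induction N with
  | zero => simp
  | succ M ih =>
    have h1 : 2 * (M + 1) = (2 * M + 1) + 1 := by ring
    rw [h1, Finset.sum_range_succ, Finset.sum_range_succ, ih, Finset.sum_range_succ,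
      S_two_mul, S_two_mul_add_one]
    ring

lemma sum_S_shift (N : ℕ) :
    ∑ j ∈ Finset.range N, S 2 (N + j) = N + ∑ k ∈ Finset.range N, S 2 k := by
  have h := Finset.sum_range_add (fun k => S 2 k) N N
  rw [show N + N = 2 * N from by ring] at h
  have h2 := sum_S_two_mul N
  omega

/-! ### Jacobsthal lemmas -/

lemma JJ : ∀ n, J n + J (n + 1) = 2 ^ (n + 1)
  | 0 => rfl
  | n + 1 => by
    have ih := JJ n
    have h : J (n + 2) = J (n + 1) + 2 * J n := rfl
    have hpow : (2:ℕ) ^ (n + 2) = 2 * 2 ^ (n + 1) := by ring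
    show J (n + 1) + J (n + 2) = 2 ^ (n + 2)
    omega

lemma threeJ : ∀ n, 3 * J n = 2 ^ (n + 1) + 1 ∨ 3 * J n + 1 = 2 ^ (n + 1)
  | 0 => by left; rfl
  | n + 1 => by
    have h1 := JJ n
    have hpow : (2:ℕ) ^ (n + 2) = 2 * 2 ^ (n + 1) := by ring
    have h2 : J (n + 2) = J (n + 1) + 2 * J n := rfl
    show 3 * J (n + 1) = 2 ^ (n + 2) + 1 ∨ 3 * J (n + 1) + 1 = 2 ^ (n + 2)
    rcases threeJ n with h | h
    · right; omega
    · left; omega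

lemma threeJ_le (n : ℕ) : 3 * J n ≤ 2 ^ (n + 1) + 1 := by
  rcases threeJ n with h | h <;> omega

/-! ### The valuation function -/

/-- `G N` is the 2-adic valuation of `T N`. -/
def G (N : ℕ) : ℤ :=
  N + (∑ k ∈ Finset.range N, (S 2 k : ℤ)) - ∑ k ∈ Finset.range N, (S 2 (3 * k + 1) : ℤ)

lemma G_succ (N : ℕ) :
    G (N + 1) = G N + 1 + (S 2 N : ℤ) - (S 2 (3 * N + 1) : ℤ) := by
  simp only [G, Finset.sum_range_succ]
  push_cast
  ring

lemma padicValNat_two_factorial (m : ℕ) : (padicValNat 2 (m !) : ℤ) = m - S 2 m := by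
  have h := sub_one_mul_padicValNat_factorial (p := 2) m
  have h2 := Nat.digit_sum_le 2 m
  simp only [S]
  omega

lemma padicValNat_prod_eq {N : ℕ} {f : ℕ → ℕ} (hf : ∀ i ∈ Finset.range N, f i ≠ 0) :
    padicValNat 2 (∏ i ∈ Finset.range N, f i) = ∑ i ∈ Finset.range N, padicValNat 2 (f i) := by
  rw [← Nat.factorization_def _ Nat.prime_two, Nat.factorization_prod hf,
    Finsupp.finset_sum_apply]
  exact Finset.sum_congr rfl fun i _ => Nat.factorization_def _ Nat.prime_two

lemma sum_id_int (N : ℕ) : 2 * ∑ j ∈ Finset.range N, (j : ℤ) = N * (N - 1) := by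
  induction N with
  | zero => simp
  | succ M ih =>
    rw [Finset.sum_range_succ]
    push_cast
    push_cast at ih
    linear_combination ih

lemma val_T (N : ℕ) : padicValRat 2 (T N) = G N := by
  have hP : (0:ℕ) < ∏ j ∈ Finset.range N, (3 * j + 1)! :=
    Finset.prod_pos fun j _ => Nat.factorial_pos _
  have hQ : (0:ℕ) < ∏ j ∈ Finset.range N, (N + j)! :=
    Finset.prod_pos fun j _ => Nat.factorial_pos _
  have h1 : T N = ((∏ j ∈ Finset.range N, (3 * j + 1)! : ℕ) : ℚ) /
      ((∏ j ∈ Finset.range N, (N + j)! : ℕ) : ℚ) := by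
    rw [T, Finset.prod_div_distrib]
    push_cast
    ring
  rw [h1, padicValRat.div (p := 2) (by exact_mod_cast hP.ne') (by exact_mod_cast hQ.ne'),
    padicValRat.of_nat, padicValRat.of_nat,
    padicValNat_prod_eq (fun i _ => (Nat.factorial_pos _).ne'),
    padicValNat_prod_eq (fun i _ => (Nat.factorial_pos _).ne')]
  rw [Nat.cast_sum, Nat.cast_sum]
  have hA : (∑ j ∈ Finset.range N, (padicValNat 2 ((3 * j + 1)!) : ℤ)) =
      ∑ j ∈ Finset.range N, ((3 * (j:ℤ) + 1) - (S 2 (3 * j + 1) : ℤ)) :=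
    Finset.sum_congr rfl fun j _ => by rw [padicValNat_two_factorial]; push_cast; ring
  have hB : (∑ j ∈ Finset.range N, (padicValNat 2 ((N + j)!) : ℤ)) =
      ∑ j ∈ Finset.range N, (((N:ℤ) + j) - (S 2 (N + j) : ℤ)) :=
    Finset.sum_congr rfl fun j _ => by rw [padicValNat_two_factorial]; push_cast; ring
  rw [hA, hB, Finset.sum_sub_distrib, Finset.sum_sub_distrib]
  have h2 : ∑ j ∈ Finset.range N, (3 * (j:ℤ) + 1) =
      3 * (∑ j ∈ Finset.range N, (j:ℤ)) + N := by
    rw [Finset.sum_add_distrib, ← Finset.mul_sum]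
    simp
  have h3 : ∑ j ∈ Finset.range N, ((N:ℤ) + j) =
      (N:ℤ) * N + ∑ j ∈ Finset.range N, (j:ℤ) := by
    rw [Finset.sum_add_distrib]
    simp [mul_comm]
  have h4 : (∑ j ∈ Finset.range N, (S 2 (N + j) : ℤ)) =
      (N:ℤ) + ∑ k ∈ Finset.range N, (S 2 k : ℤ) := by
    exact_mod_cast congrArg (Nat.cast : ℕ → ℤ) (sum_S_shift N)
  have h5 := sum_id_int N
  rw [h2, h3, h4, G]
  linear_combination h5

/-! ### The symmetry of `G` around powers of two -/

lemma G_symm (n : ℕ) : ∀ i, i ≤ J n → G (2 ^ (n + 1) - i) = G (2 ^ (n + 1) + i) := by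
  intro i
  induction i with
  | zero => simp
  | succ q ih =>
    intro hq
    have ihq := ih (by omega)
    have h3J := threeJ_le n
    have hx : 3 * q + 3 ≤ 2 ^ (n + 1) + 1 := by
      have : 3 * (q + 1) ≤ 3 * J n := by omega
      omega
    have hpow : (2:ℕ) ^ (n + 2) = 2 * 2 ^ (n + 1) := by ring
    have hb2 : (2:ℕ) ≤ 2 ^ (n + 1) := by
      have : (2:ℕ) ^ 1 ≤ 2 ^ (n + 1) := Nat.pow_le_pow_right (by norm_num) (by omega)
      simpa using this
    have hq2 : q < 2 ^ (n + 1) := by omega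
    -- the four digit-sum facts
    have hA := S_compl (n + 1) q hq2
    rw [show 2 ^ (n + 1) - 1 - q = 2 ^ (n + 1) - (q + 1) from by omega] at hA
    have hB := S_pow_add (n + 1) q hq2
    have hD : S 2 (3 * 2 ^ (n + 1) + (3 * q + 1)) = S 2 (3 * q + 1) + 2 := by
      have h1 : 3 * 2 ^ (n + 1) + (3 * q + 1) = 2 ^ (n + 2) + (2 ^ (n + 1) + (3 * q + 1)) := by
        omega
      rw [h1, S_pow_add (n + 2) _ (by omega), S_pow_add (n + 1) _ (by omega)]
    have hC : S 2 (3 * 2 ^ (n + 1) - (3 * q + 2)) + S 2 (3 * q + 1) = (n + 1) + 1 := by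
      have h1 : 3 * 2 ^ (n + 1) - (3 * q + 2) = 2 ^ (n + 2) + (2 ^ (n + 1) - (3 * q + 2)) := by
        omega
      rw [h1, S_pow_add (n + 2) _ (by omega)]
      have h2 := S_compl (n + 1) (3 * q + 1) (by omega)
      rw [show 2 ^ (n + 1) - 1 - (3 * q + 1) = 2 ^ (n + 1) - (3 * q + 2) from by omega] at h2
      omega
    -- the two recursion steps
    have g1 : G (2 ^ (n + 1) - q) = G (2 ^ (n + 1) - (q + 1)) + 1
        + (S 2 (2 ^ (n + 1) - (q + 1)) : ℤ)
        - (S 2 (3 * 2 ^ (n + 1) - (3 * q + 2)) : ℤ) := by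
      have e1 : 2 ^ (n + 1) - q = (2 ^ (n + 1) - (q + 1)) + 1 := by omega
      have e2 : 3 * (2 ^ (n + 1) - (q + 1)) + 1 = 3 * 2 ^ (n + 1) - (3 * q + 2) := by omega
      rw [e1, G_succ, e2]
    have g2 : G (2 ^ (n + 1) + (q + 1)) = G (2 ^ (n + 1) + q) + 1
        + (S 2 (2 ^ (n + 1) + q) : ℤ)
        - (S 2 (3 * 2 ^ (n + 1) + (3 * q + 1)) : ℤ) := by
      have e1 : 2 ^ (n + 1) + (q + 1) = (2 ^ (n + 1) + q) + 1 := by omega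
      have e2 : 3 * (2 ^ (n + 1) + q) + 1 = 3 * 2 ^ (n + 1) + (3 * q + 1) := by ring
      rw [e1, G_succ, e2]
    omega

theorem stmt12 (n i : ℕ) (hi : 1 ≤ i) (hi' : i ≤ J n) :
    padicValRat 2 (T (2 ^ (n + 1) - i)) = padicValRat 2 (T (2 ^ (n + 1) + i)) := by
  rw [val_T, val_T]
  exact G_symm n i hi'
end

section
/- For every positive integer n, ν_3(T(3n)) = 3 ν_3(T(n)). In particular ν_3(T(3^n)) = ν_3(T(2·3^n)) = 0 for all n. -/
open Nat Finset

instance : Fact (Nat.Prime 3) := ⟨by norm_num⟩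

/-- Partial sums of base-3 digit sums. -/
def fS (n : ℕ) : ℕ := ∑ j ∈ Finset.range n, S 3 j

lemma S_three_mul_add (q r : ℕ) (hr : r < 3) : S 3 (3 * q + r) = S 3 q + r := by
  rcases Nat.eq_zero_or_pos (3 * q + r) with h | h
  · have hq : q = 0 := by omega
    have hr0 : r = 0 := by omega
    simp [hq, hr0, S]
  · unfold S
    rw [Nat.digits_def' (by norm_num : 1 < 3) h]
    have h1 : (3 * q + r) % 3 = r := by omega
    have h2 : (3 * q + r) / 3 = q := by omega
    rw [h1, h2, List.sum_cons]
    omega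

lemma fS_three_mul (m : ℕ) : fS (3 * m) = 3 * fS m + 3 * m := by
  induction m with
  | zero => simp [fS]
  | succ m ih =>
    have h3 : 3 * (m + 1) = (3 * m + 1 + 1) + 1 := by ring
    unfold fS at *
    rw [h3, Finset.sum_range_succ, Finset.sum_range_succ, Finset.sum_range_succ,
      Finset.sum_range_succ]
    have e0 : S 3 (3 * m) = S 3 m := by simpa using S_three_mul_add m 0 (by norm_num)
    have e1 : S 3 (3 * m + 1) = S 3 m + 1 := S_three_mul_add m 1 (by norm_num)
    have e2 : S 3 (3 * m + 2) = S 3 m + 2 := S_three_mul_add m 2 (by norm_num)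
    omega

lemma gauss_sum (n : ℕ) : 2 * ∑ i ∈ Finset.range n, (i : ℤ) = (n : ℤ) ^ 2 - n := by
  induction n with
  | zero => simp
  | succ m ih =>
    rw [Finset.sum_range_succ]
    push_cast
    linear_combination ih

lemma two_val_factorial (m : ℕ) :
    2 * (padicValNat 3 (m !) : ℤ) = (m : ℤ) - (S 3 m : ℤ) := by
  have h := sub_one_mul_padicValNat_factorial (p := 3) m
  have hle : (Nat.digits 3 m).sum ≤ m := Nat.digit_sum_le 3 m
  have hS : S 3 m = (Nat.digits 3 m).sum := rfl
  norm_num at h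
  omega

lemma padicValRat_prod_s16 {p : ℕ} [Fact p.Prime] (s : Finset ℕ) (F : ℕ → ℚ)
    (h : ∀ i ∈ s, F i ≠ 0) :
    padicValRat p (∏ i ∈ s, F i) = ∑ i ∈ s, padicValRat p (F i) := by
  induction s using Finset.cons_induction with
  | empty => simp [padicValRat.one]
  | cons a s ha ih =>
    rw [Finset.prod_cons, Finset.sum_cons,
      padicValRat.mul (h a (Finset.mem_cons_self a s))
        (Finset.prod_ne_zero_iff.2 fun i hi => h i (Finset.mem_cons_of_mem hi)),
      ih fun i hi => h i (Finset.mem_cons_of_mem hi)]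

lemma valT (n : ℕ) :
    padicValRat 3 (T n) =
      ∑ j ∈ Finset.range n,
        ((padicValNat 3 ((3 * j + 1)!) : ℤ) - (padicValNat 3 ((n + j)!) : ℤ)) := by
  unfold T
  rw [padicValRat_prod_s16 _ _ (fun i _ => by
    have h1 : ((3 * i + 1)! : ℚ) ≠ 0 := by positivity
    have h2 : ((n + i)! : ℚ) ≠ 0 := by positivity
    exact div_ne_zero h1 h2)]
  refine Finset.sum_congr rfl fun j _ => ?_
  have h1 : ((3 * j + 1)! : ℚ) ≠ 0 := by positivity
  have h2 : ((n + j)! : ℚ) ≠ 0 := by positivity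
  rw [padicValRat.div h1 h2, padicValRat.of_nat, padicValRat.of_nat]

lemma two_valT (n : ℕ) :
    2 * padicValRat 3 (T n) = (fS (2 * n) : ℤ) - 2 * (fS n : ℤ) - n := by
  rw [valT, Finset.mul_sum]
  have hterm : ∀ j ∈ Finset.range n,
      2 * ((padicValNat 3 ((3 * j + 1)!) : ℤ) - (padicValNat 3 ((n + j)!) : ℤ)) =
        (((3 * j + 1 : ℕ) : ℤ) - (S 3 (3 * j + 1) : ℤ))
          - (((n + j : ℕ) : ℤ) - (S 3 (n + j) : ℤ)) := by
    intro j _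
    have a := two_val_factorial (3 * j + 1)
    have b := two_val_factorial (n + j)
    omega
  rw [Finset.sum_congr rfl hterm]
  have hSsplit : ∀ j : ℕ, S 3 (3 * j + 1) = S 3 j + 1 := fun j =>
    S_three_mul_add j 1 (by norm_num)
  have hA : ∑ j ∈ Finset.range n, (S 3 (n + j) : ℤ) = (fS (2 * n) : ℤ) - (fS n : ℤ) := by
    have h1 : fS n + ∑ j ∈ Finset.range n, S 3 (n + j) = fS (2 * n) := by
      unfold fS
      rw [show 2 * n = n + n by ring, Finset.sum_range_add]
    push_cast [← h1]
    ring
  have hB : ∑ j ∈ Finset.range n, (S 3 (3 * j + 1) : ℤ) = (fS n : ℤ) + n := by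
    have h1 : ∑ j ∈ Finset.range n, S 3 (3 * j + 1) = fS n + n := by
      unfold fS
      rw [Finset.sum_congr rfl fun j _ => hSsplit j, Finset.sum_add_distrib]
      simp
    exact_mod_cast h1
  have hg := gauss_sum n
  have hlin : ∑ j ∈ Finset.range n, ((3 * j + 1 : ℕ) : ℤ) =
      ∑ j ∈ Finset.range n, ((n + j : ℕ) : ℤ) := by
    push_cast
    rw [Finset.sum_add_distrib, Finset.sum_add_distrib, ← Finset.mul_sum,
      Finset.sum_const, Finset.sum_const]
    simp only [Finset.card_range, nsmul_eq_mul, mul_one]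
    linear_combination hg
  have expand : ∑ j ∈ Finset.range n,
      ((((3 * j + 1 : ℕ) : ℤ) - (S 3 (3 * j + 1) : ℤ))
        - (((n + j : ℕ) : ℤ) - (S 3 (n + j) : ℤ))) =
      (∑ j ∈ Finset.range n, ((3 * j + 1 : ℕ) : ℤ))
        - (∑ j ∈ Finset.range n, (S 3 (3 * j + 1) : ℤ))
        - ((∑ j ∈ Finset.range n, ((n + j : ℕ) : ℤ))
          - ∑ j ∈ Finset.range n, (S 3 (n + j) : ℤ)) := by
    rw [← Finset.sum_sub_distrib, ← Finset.sum_sub_distrib, ← Finset.sum_sub_distrib]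
  rw [expand, hlin, hA, hB]
  ring

lemma part1 (n : ℕ) : padicValRat 3 (T (3 * n)) = 3 * padicValRat 3 (T n) := by
  have h1 := two_valT (3 * n)
  have h2 := two_valT n
  have e1 := fS_three_mul (2 * n)
  have e2 := fS_three_mul n
  have h6 : 2 * (3 * n) = 3 * (2 * n) := by ring
  rw [h6] at h1
  omega

lemma valT1 : padicValRat 3 (T 1) = 0 := by
  have : T 1 = 1 := by
    simp [T, Finset.prod_range_one]
  rw [this, padicValRat.one]

lemma valT2 : padicValRat 3 (T 2) = 0 := by
  have h : T 2 = 2 := by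
    simp [T, Finset.prod_range_succ, Nat.factorial]
    norm_num
  rw [h, show (2 : ℚ) = ((2 : ℕ) : ℚ) by norm_num, padicValRat.of_nat]
  simp [padicValNat.eq_zero_of_not_dvd (by norm_num : ¬ (3 ∣ 2))]

theorem stmt16 :
    (∀ n : ℕ, 0 < n → padicValRat 3 (T (3 * n)) = 3 * padicValRat 3 (T n)) ∧
    (∀ n : ℕ, padicValRat 3 (T (3 ^ n)) = 0 ∧ padicValRat 3 (T (2 * 3 ^ n)) = 0) := by
  constructor
  · intro n _; exact part1 n
  · intro n
    induction n with
    | zero => exact ⟨by simpa using valT1, by simpa using valT2⟩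
    | succ n ih =>
      constructor
      · rw [show 3 ^ (n + 1) = 3 * 3 ^ n by ring, part1, ih.1, mul_zero]
      · rw [show 2 * 3 ^ (n + 1) = 3 * (2 * 3 ^ n) by ring, part1, ih.2, mul_zero]
end
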